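/- Let G be a quasi 5-connected graph and xy ∈ E(G). If the minimum degree of G/xy is at least 4, then G/xy is 4-connected. -/

import Mathlib

open SimpleGraph Set

variable {V : Type*}

/-- `G` is `k`-connected: more than `k` vertices and removing fewer than `k`
vertices leaves a connected graph. -/
def IsKConnected (k : ℕ) [Fintype V] (G : SimpleGraph V) : Prop :=
  k + 1 ≤ Fintype.card V ∧
    ∀ S : Set V, S.ncard < k → (G.induce Sᶜ).Connected

/-- Contraction of the edge `xy`: identify `y` with `x`, simplifying multiple edges. -/
def contractE [DecidableEq V] (G : SimpleGraph V) (x y : V) :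
    SimpleGraph {v : V // v ≠ y} :=
  SimpleGraph.fromRel (fun a b =>
    G.Adj a.1 b.1 ∨ (a.1 = x ∧ G.Adj y b.1) ∨ (b.1 = x ∧ G.Adj y a.1))

/-- The (outer) neighborhood of a vertex set `A`. -/
def gBoundary (G : SimpleGraph V) (A : Set V) : Set V :=
  {v | v ∉ A ∧ ∃ a ∈ A, G.Adj v a}

/-- `S` separates `G`: the rest of the graph splits into two nonempty parts
with no edges between them. -/
def Separates (G : SimpleGraph V) (S : Set V) : Prop :=
  ∃ A B : Set V, A.Nonempty ∧ B.Nonempty ∧ Disjoint A B ∧ A ∪ B = Sᶜ ∧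
    ∀ a ∈ A, ∀ b ∈ B, ¬ G.Adj a b

/-- `T` is a nontrivial 4-cut: `|T| = 4` and `G - T` splits into two parts,
each of size at least 2, with no edges between them. -/
def IsNontrivialFourCut (G : SimpleGraph V) (T : Set V) : Prop :=
  T.ncard = 4 ∧ ∃ A B : Set V, 2 ≤ A.ncard ∧ 2 ≤ B.ncard ∧ Disjoint A B ∧
    A ∪ B = Tᶜ ∧ ∀ a ∈ A, ∀ b ∈ B, ¬ G.Adj a b

/-- `G` is quasi 5-connected: 4-connected without a nontrivial 4-cut. -/
def QuasiFiveConnected [Fintype V] (G : SimpleGraph V) : Prop :=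
  IsKConnected 4 G ∧ ∀ T : Set V, ¬ IsNontrivialFourCut G T

/-- `G` is contraction critical quasi 5-connected. -/
def ContractionCriticalQuasiFive [Fintype V] [DecidableEq V] (G : SimpleGraph V) : Prop :=
  QuasiFiveConnected G ∧
    ∀ x y : V, G.Adj x y → ¬ QuasiFiveConnected (contractE G x y)

/-- `A` is a fragment of `G`: both `A` and its "far side" are nonempty and the
neighborhood of `A` is a smallest separating set. -/
def IsFragment (G : SimpleGraph V) (A : Set V) : Prop :=
  A.Nonempty ∧ (Aᶜ \ gBoundary G A).Nonempty ∧
    ∀ S : Set V, Separates G S → (gBoundary G A).ncard ≤ S.ncard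

/-- A nontrivial fragment: both sides have at least two vertices. -/
def IsNontrivialFragment (G : SimpleGraph V) (A : Set V) : Prop :=
  IsFragment G A ∧ 2 ≤ A.ncard ∧ 2 ≤ (Aᶜ \ gBoundary G A).ncard

/-- Degree sum at least 9 for every pair of vertices at distance one or two. -/
def DegSumNine (G : SimpleGraph V) : Prop :=
  ∀ u v : V, (G.dist u v = 1 ∨ G.dist u v = 2) →
    9 ≤ (G.neighborSet u).ncard + (G.neighborSet v).ncard

/-!
Every vertex of `G/xy` has degree at least `4`, so if at most three vertices `S` separate `G/xy`,
both sides of the separation contain at least two vertices. Undoing the contraction turns this into a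
separation of `G` by `S ∪ {y}`, a set of at most four vertices, again with both sides of size at
least two: this is either a cut of size less than four or a nontrivial 4-cut of `G`.
-/

structure IsSeparation (G : SimpleGraph V) (S A B : Set V) : Prop where
  left_nonempty : A.Nonempty
  right_nonempty : B.Nonempty
  disjoint : Disjoint A B
  union_eq : A ∪ B = Sᶜ
  not_adj : ∀ a ∈ A, ∀ b ∈ B, ¬ G.Adj a b

namespace IsSeparation

variable {G : SimpleGraph V} {S A B : Set V}

lemma symm (hs : IsSeparation G S A B) : IsSeparation G S B A where
  left_nonempty := hs.right_nonempty
  right_nonempty := hs.left_nonempty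
  disjoint := hs.disjoint.symm
  union_eq := by rw [union_comm, hs.union_eq]
  not_adj a ha b hb hab := hs.not_adj b hb a ha hab.symm

lemma mem_left_or_right (hs : IsSeparation G S A B) {v : V} (hv : v ∉ S) : v ∈ A ∨ v ∈ B := by
  rw [← mem_union, hs.union_eq]
  exact hv

lemma not_connected (hs : IsSeparation G S A B) : ¬ (G.induce Sᶜ).Connected := by
  intro hc
  obtain ⟨a, ha⟩ := hs.left_nonempty
  obtain ⟨b, hb⟩ := hs.right_nonempty
  have walk_stays_in_left {u w : (Sᶜ : Set V)} (p : (G.induce Sᶜ).Walk u w) :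
      u.1 ∈ A → w.1 ∈ A := by
    induction p with
    | nil => exact id
    | cons huv _ ih =>
      refine fun hu => ih ?_
      rcases hs.mem_left_or_right (Subtype.prop _ : _ ∈ Sᶜ) with hv | hv
      · exact hv
      · exact absurd huv (hs.not_adj _ hu _ hv)
  have mem_compl {v : V} (hv : v ∈ A ∪ B) : v ∈ Sᶜ := hs.union_eq ▸ hv
  obtain ⟨p⟩ := hc.preconnected ⟨a, mem_compl (.inl ha)⟩ ⟨b, mem_compl (.inr hb)⟩
  exact disjoint_left.mp hs.disjoint (walk_stays_in_left p ha) hb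

lemma neighborSet_subset (hs : IsSeparation G S A B) {v : V} (hv : v ∈ A) :
    G.neighborSet v ⊆ A ∪ S := by
  intro w hw
  by_contra hwAS
  rcases hs.mem_left_or_right fun hwS => hwAS (.inr hwS) with hwA | hwB
  · exact hwAS (.inl hwA)
  · exact hs.not_adj v hv w hwB hw

/-- A lone vertex on one side would have all its neighbours in the separator. -/
lemma two_le_ncard_left [Finite V] (hs : IsSeparation G S A B)
    (hdeg : ∀ v, S.ncard < (G.neighborSet v).ncard) : 2 ≤ A.ncard := by
  by_contra! hA
  obtain ⟨v, hv⟩ := hs.left_nonempty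
  have hsub : G.neighborSet v ⊆ S := by
    intro w hw
    rcases hs.neighborSet_subset hv hw with hwA | hwS
    · have hwv : w = v := (ncard_le_one_iff (toFinite A)).mp (by omega) hwA hv
      exact absurd (hwv ▸ hw : G.Adj v v) (G.loopless.irrefl v)
    · exact hwS
  exact (hdeg v).not_ge (ncard_le_ncard hsub)

end IsSeparation

section Connectivity

variable {G : SimpleGraph V}

lemma exists_isSeparation_of_not_connected {S : Set V} (hS : Sᶜ.Nonempty)
    (h : ¬ (G.induce Sᶜ).Connected) : ∃ A B, IsSeparation G S A B := by
  obtain ⟨u₀, hu₀⟩ := hS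
  have : Nonempty (Sᶜ : Set V) := ⟨⟨u₀, hu₀⟩⟩
  obtain ⟨u, w, huw⟩ : ∃ u w, ¬ (G.induce Sᶜ).Reachable u w := by
    by_contra! hr
    exact h ⟨hr⟩
  set R : Set V := Subtype.val '' {z | (G.induce Sᶜ).Reachable u z}
  refine ⟨R, Sᶜ \ R, ⟨u, u, .refl u, rfl⟩, ⟨w, w.2, ?_⟩, disjoint_sdiff_right,
    union_sdiff_cancel ?_, ?_⟩
  · rintro ⟨z, hz, hzw⟩
    exact huw (Subtype.ext hzw ▸ hz)
  · rintro _ ⟨z, _, rfl⟩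
    exact z.2
  · rintro _ ⟨z, hz, rfl⟩ b ⟨hbS, hbR⟩ hzb
    exact hbR ⟨⟨b, hbS⟩, hz.trans (Adj.reachable (G := G.induce Sᶜ) hzb), rfl⟩

variable [Fintype V]

lemma IsKConnected.le_ncard_of_isSeparation {k : ℕ} (hG : IsKConnected k G) {S A B : Set V}
    (hs : IsSeparation G S A B) : k ≤ S.ncard :=
  not_lt.mp fun hlt => hs.not_connected (hG.2 S hlt)

lemma isKConnected_of_forall_isSeparation {k : ℕ} (hcard : k + 1 ≤ Fintype.card V)
    (hsep : ∀ S A B : Set V, S.ncard < k → ¬ IsSeparation G S A B) : IsKConnected k G := by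
  refine ⟨hcard, fun S hS => ?_⟩
  by_contra hdisc
  have hS_ne : Sᶜ.Nonempty := by
    rw [nonempty_compl]
    rintro rfl
    rw [ncard_univ, Nat.card_eq_fintype_card] at hS
    omega
  obtain ⟨A, B, hs⟩ := exists_isSeparation_of_not_connected hS_ne hdisc
  exact hsep S A B hS hs

lemma lt_card_of_le_ncard_neighborSet [Nonempty V] {k : ℕ}
    (hdeg : ∀ v, k ≤ (G.neighborSet v).ncard) : k < Fintype.card V := by
  obtain ⟨v⟩ := ‹Nonempty V›
  have hne : G.neighborSet v ≠ univ := fun h => G.loopless.irrefl v (h ▸ mem_univ v :)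
  exact (hdeg v).trans_lt (Nat.card_eq_fintype_card (α := V) ▸ ncard_lt_card hne)

lemma QuasiFiveConnected.not_isSeparation (hG : QuasiFiveConnected G) {T A B : Set V}
    (hs : IsSeparation G T A B) (hT : T.ncard ≤ 4) (hA : 2 ≤ A.ncard) (hB : 2 ≤ B.ncard) :
    False := by
  rcases hT.lt_or_eq with hlt | heq
  · exact hlt.not_ge (hG.1.le_ncard_of_isSeparation hs)
  · exact hG.2 T ⟨heq, A, B, hA, hB, hs.disjoint, hs.union_eq, hs.not_adj⟩

end Connectivity

section Contraction

variable [DecidableEq V] {G : SimpleGraph V} {x y : V}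

lemma contractE_adj_of_adj {a b : {v : V // v ≠ y}} (h : G.Adj a.1 b.1) :
    (contractE G x y).Adj a b :=
  (fromRel_adj _ _ _).mpr ⟨fun hab => G.loopless.irrefl _ (hab ▸ h), .inl (.inl h)⟩

lemma compl_insert_image_val (C : Set {v : V // v ≠ y}) :
    (insert y (Subtype.val '' C))ᶜ = Subtype.val '' Cᶜ := by
  ext v
  by_cases hvy : v = y
  · subst hvy
    simp
  · simp [hvy]

/-- Uncontracting: `y` joins the separator, whichever side `x` lies on. -/
lemma IsSeparation.of_contractE {S A B : Set {v : V // v ≠ y}}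
    (hs : IsSeparation (contractE G x y) S A B) :
    IsSeparation G (insert y (Subtype.val '' S)) (Subtype.val '' A) (Subtype.val '' B) where
  left_nonempty := hs.left_nonempty.image _
  right_nonempty := hs.right_nonempty.image _
  disjoint := (disjoint_image_iff Subtype.val_injective).mpr hs.disjoint
  union_eq := by rw [compl_insert_image_val, ← hs.union_eq, image_union]
  not_adj := by
    rintro _ ⟨a, ha, rfl⟩ _ ⟨b, hb, rfl⟩ hab
    exact hs.not_adj a ha b hb (contractE_adj_of_adj hab)

end Contraction

theorem stmt3_general {V : Type*} [Fintype V] [DecidableEq V] (G : SimpleGraph V)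
    (hG : QuasiFiveConnected G) (x y : V)
    (hdeg : ∀ v : {v : V // v ≠ y}, 4 ≤ ((contractE G x y).neighborSet v).ncard) :
    IsKConnected 4 (contractE G x y) := by
  have : Nonempty {v : V // v ≠ y} := by
    have : Nontrivial V := Fintype.one_lt_card_iff_nontrivial.mp (by linarith [hG.1.1])
    obtain ⟨v, hv⟩ := exists_ne y
    exact ⟨⟨v, hv⟩⟩
  refine isKConnected_of_forall_isSeparation (lt_card_of_le_ncard_neighborSet hdeg)
    fun S A B hS hs => ?_
  have hdeg' : ∀ v, S.ncard < ((contractE G x y).neighborSet v).ncard := fun v =>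
    hS.trans_le (hdeg v)
  have hval (C : Set {v : V // v ≠ y}) : (Subtype.val '' C).ncard = C.ncard :=
    ncard_image_of_injective _ Subtype.val_injective
  have hT : (insert y (Subtype.val '' S)).ncard ≤ 4 := by
    grw [ncard_insert_le, hval]
    omega
  exact hG.not_isSeparation hs.of_contractE hT
    (hval A ▸ hs.two_le_ncard_left hdeg') (hval B ▸ hs.symm.two_le_ncard_left hdeg')

/-- If `G` is quasi 5-connected, `xy ∈ E(G)` and `G/xy` has
minimum degree at least 4, then `G/xy` is 4-connected. -/
theorem stmt3 {V : Type*} [Fintype V] [DecidableEq V] (G : SimpleGraph V)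
    (hG : QuasiFiveConnected G) (x y : V) (hxy : G.Adj x y)
    (hdeg : ∀ v : {v : V // v ≠ y}, 4 ≤ ((contractE G x y).neighborSet v).ncard) :
    IsKConnected 4 (contractE G x y) :=
  stmt3_general G hG x y hdeg
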